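/- arXiv:math-ph/0007034 — 2 statements merged into one kernel-verified Lean document; each statement's English description precedes it below -/
import Mathlib

section
/- Let Ω ⊆ ℂ be open, let a, b, U be smooth real-valued functions on Ω, let h be a smooth positive real-valued function on Ω, and let L ψ = -h²[(∂ₓ - ia)²ψ + (∂_y - ib)²ψ] + Uψ. Then there exist smooth functions α₁, α₀, α₁*, α₀* : Ω → ℂ such that Lψ = (α₁∂ + α₀)((α₁*∂̄ + α₀*)ψ) for every smooth ψ : Ω → ℂ if and only if U = -B, where B = h²(∂ₓb - ∂_y a). -/
open Complex ComplexConjugate MeasureTheory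

noncomputable section

/-- Partial derivative in the x-direction (identifying ℂ with ℝ²). -/
def pdx (f : ℂ → ℂ) (z : ℂ) : ℂ := fderiv ℝ f z 1

/-- Partial derivative in the y-direction. -/
def pdy (f : ℂ → ℂ) (z : ℂ) : ℂ := fderiv ℝ f z Complex.I

/-- Wirtinger derivative ∂ = (∂ₓ - i ∂_y)/2. -/
def wd (f : ℂ → ℂ) (z : ℂ) : ℂ := (pdx f z - Complex.I * pdy f z) / 2

/-- Wirtinger derivative ∂̄ = (∂ₓ + i ∂_y)/2. -/
def wdb (f : ℂ → ℂ) (z : ℂ) : ℂ := (pdx f z + Complex.I * pdy f z) / 2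

/-- x-derivative of a real-valued function. -/
def pdxR (f : ℂ → ℝ) (z : ℂ) : ℝ := fderiv ℝ f z 1

/-- y-derivative of a real-valued function. -/
def pdyR (f : ℂ → ℝ) (z : ℂ) : ℝ := fderiv ℝ f z Complex.I

/-- Magnetic field B = h²(∂ₓ b - ∂_y a). -/
def Bf (a b h : ℂ → ℝ) (z : ℂ) : ℝ := (h z)^2 * (pdxR b z - pdyR a z)

/-- Covariant derivative ∇ψ = ∂ψ - iAψ with A = (a - ib)/2. -/
def cd (a b : ℂ → ℝ) (ψ : ℂ → ℂ) (z : ℂ) : ℂ :=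
  wd ψ z - Complex.I * (((a z : ℂ) - Complex.I * (b z : ℂ)) / 2) * ψ z

/-- Covariant derivative ∇̄ψ = ∂̄ψ - iĀψ with Ā = (a + ib)/2. -/
def cdb (a b : ℂ → ℝ) (ψ : ℂ → ℂ) (z : ℂ) : ℂ :=
  wdb ψ z - Complex.I * (((a z : ℂ) + Complex.I * (b z : ℂ)) / 2) * ψ z

/-- Magnetic covariant x-derivative ∇ₓψ = ∂ₓψ - iaψ. -/
def cdx (a : ℂ → ℝ) (ψ : ℂ → ℂ) (z : ℂ) : ℂ := pdx ψ z - Complex.I * (a z : ℂ) * ψ z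

/-- Magnetic covariant y-derivative ∇_yψ = ∂_yψ - ibψ. -/
def cdy (b : ℂ → ℝ) (ψ : ℂ → ℂ) (z : ℂ) : ℂ := pdy ψ z - Complex.I * (b z : ℂ) * ψ z

/-- The Schrödinger operator L ψ = -h²[(∂ₓ - ia)²ψ + (∂_y - ib)²ψ] + Uψ. -/
def LSch (a b h U : ℂ → ℝ) (ψ : ℂ → ℂ) (z : ℂ) : ℂ :=
  -(h z : ℂ)^2 * (cdx a (cdx a ψ) z + cdy b (cdy b ψ) z) + (U z : ℂ) * ψ z

/-!
With `A = (a - ib)/2`, `∇ = ∂ - iA` and `∇̄ = ∂̄ - iĀ` one has `L = -4h²∇∇̄ + (U + B)`. Both `L`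
and any product `(α₁∂ + α₀)(α₁*∂̄ + α₀*)` are operators `c₂∂∂̄ + c₁∂ + c₁'∂̄ + c₀` whose
coefficients at a point `z` are determined by the operator: apply it to `1`, `w - z`, `w̄ - z̄` and
`|w - z|²`. Comparing the `∂∂̄` and `∂` coefficients gives `α₁α₁* = -4h²` and
`α₀* = -iĀα₁*` (as `h ≠ 0`); the zeroth-order coefficients then agree exactly when `U + B = 0`.
Conversely `α₁ = -4h²`, `α₀ = 4ih²A`, `α₁* = 1`, `α₀* = -iĀ` factor `L` when `U = -B`.
-/

@[fun_prop]
lemma Complex.contDiff_ofReal {n : WithTop ℕ∞} : ContDiff ℝ n ((↑) : ℝ → ℂ) := ofRealCLM.contDiff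

@[fun_prop]
lemma Complex.contDiff_conj {n : WithTop ℕ∞} : ContDiff ℝ n (conj : ℂ → ℂ) := conjCLE.contDiff

attribute [fun_prop] Complex.differentiable_ofReal

section Calculus

variable {f g : ℂ → ℂ} {u : ℂ → ℝ} {z : ℂ}

lemma fderiv_apply_fun_add (hf : DifferentiableAt ℝ f z) (hg : DifferentiableAt ℝ g z) (v : ℂ) :
    fderiv ℝ (fun w => f w + g w) z v = fderiv ℝ f z v + fderiv ℝ g z v := by
  simp [fderiv_fun_add hf hg]

lemma fderiv_apply_fun_mul (hf : DifferentiableAt ℝ f z) (hg : DifferentiableAt ℝ g z) (v : ℂ) :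
    fderiv ℝ (fun w => f w * g w) z v = fderiv ℝ f z v * g z + f z * fderiv ℝ g z v := by
  simp [fderiv_fun_mul hf hg]; ring

lemma fderiv_apply_ofReal (hu : DifferentiableAt ℝ u z) (v : ℂ) :
    fderiv ℝ (fun w => (u w : ℂ)) z v = fderiv ℝ u z v := by
  have hu' : HasFDerivAt (fun w => (u w : ℂ)) (ofRealCLM.comp (fderiv ℝ u z)) z :=
    ofRealCLM.hasFDerivAt.comp z hu.hasFDerivAt
  rw [hu'.fderiv]; rfl

lemma ContDiffAt.differentiableAt_fderiv_apply (hf : ContDiffAt ℝ 2 f z) (v : ℂ) :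
    DifferentiableAt ℝ (fun w => fderiv ℝ f w v) z :=
  ((hf.fderiv_right (m := 1) (by norm_num)).differentiableAt one_ne_zero).clm_apply
    (differentiableAt_const v)

lemma ContDiffAt.fderiv_apply_fderiv_apply (hf : ContDiffAt ℝ 2 f z) (u v : ℂ) :
    fderiv ℝ (fun w => fderiv ℝ f w u) z v = fderiv ℝ (fderiv ℝ f) z v u := by
  rw [fderiv_clm_apply ((hf.fderiv_right (m := 1) (by norm_num)).differentiableAt one_ne_zero)
    (differentiableAt_const u)]
  simp

lemma fderiv_conj (z : ℂ) : fderiv ℝ (conj : ℂ → ℂ) z = conjCLE.toContinuousLinearMap :=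
  conjCLE.fderiv

end Calculus

section Wirtinger

variable {f g ψ : ℂ → ℂ} {z : ℂ}

lemma wd_fun_add (hf : DifferentiableAt ℝ f z) (hg : DifferentiableAt ℝ g z) :
    wd (fun w => f w + g w) z = wd f z + wd g z := by
  simp only [wd, pdx, pdy, fderiv_apply_fun_add hf hg]; ring

lemma wd_fun_mul (hf : DifferentiableAt ℝ f z) (hg : DifferentiableAt ℝ g z) :
    wd (fun w => f w * g w) z = wd f z * g z + f z * wd g z := by
  simp only [wd, pdx, pdy, fderiv_apply_fun_mul hf hg]; ring

lemma wdb_fun_mul (hf : DifferentiableAt ℝ f z) (hg : DifferentiableAt ℝ g z) :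
    wdb (fun w => f w * g w) z = wdb f z * g z + f z * wdb g z := by
  simp only [wdb, pdx, pdy, fderiv_apply_fun_mul hf hg]; ring

lemma Filter.EventuallyEq.wd_eq (hfg : f =ᶠ[nhds z] g) : wd f z = wd g z := by
  simp only [wd, pdx, pdy, hfg.fderiv_eq]

lemma wd_const (c : ℂ) : wd (fun _ => c) = fun _ => 0 := by
  ext; simp [wd, pdx, pdy]

lemma wdb_const (c : ℂ) : wdb (fun _ => c) = fun _ => 0 := by
  ext; simp [wdb, pdx, pdy]

lemma wd_const_mul (c : ℂ) (hf : DifferentiableAt ℝ f z) :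
    wd (fun w => c * f w) z = c * wd f z := by
  simp [wd_fun_mul (differentiableAt_const c) hf, wd_const]

lemma wd_id_sub_const (c : ℂ) : wd (fun w => w - c) = fun _ => 1 := by
  ext; simp [wd, pdx, pdy, fderiv_sub_const]

lemma wdb_id_sub_const (c : ℂ) : wdb (fun w => w - c) = fun _ => 0 := by
  ext; simp [wdb, pdx, pdy, fderiv_sub_const]

lemma wd_conj_sub_const (c : ℂ) : wd (fun w => conj w - c) = fun _ => 0 := by
  ext; simp [wd, pdx, pdy, fderiv_sub_const, fderiv_conj]

lemma wdb_conj_sub_const (c : ℂ) : wdb (fun w => conj w - c) = fun _ => 1 := by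
  ext; simp [wdb, pdx, pdy, fderiv_sub_const, fderiv_conj]

lemma wd_ofReal_add_I_mul_ofReal {a b : ℂ → ℝ} (ha : DifferentiableAt ℝ a z)
    (hb : DifferentiableAt ℝ b z) :
    wd (fun w => (a w : ℂ) + I * b w) z
      = (pdxR a z + pdyR b z + I * (pdxR b z - pdyR a z)) / 2 := by
  simp only [wd, pdx, pdy, pdxR, pdyR]
  have hb' : DifferentiableAt ℝ (fun w => (b w : ℂ)) z := by fun_prop
  rw [fderiv_apply_fun_add (by fun_prop) (by fun_prop),
    fderiv_apply_fun_add (by fun_prop) (by fun_prop), fderiv_const_mul hb']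
  simp only [FunLike.coe_smul, Pi.smul_apply, smul_eq_mul, fderiv_apply_ofReal ha,
    fderiv_apply_ofReal hb]
  linear_combination -(fderiv ℝ b z I : ℂ) / 2 * I_sq

end Wirtinger

section SecondOrder

variable {ψ : ℂ → ℂ} {z : ℂ}

lemma ContDiffAt.differentiableAt_wdb (hψ : ContDiffAt ℝ 2 ψ z) :
    DifferentiableAt ℝ (wdb ψ) z := by
  have h1 := hψ.differentiableAt_fderiv_apply 1
  have hI := hψ.differentiableAt_fderiv_apply I
  unfold wdb pdx pdy
  fun_prop

lemma ContDiffAt.fderiv_apply_wdb (hψ : ContDiffAt ℝ 2 ψ z) (v : ℂ) :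
    fderiv ℝ (wdb ψ) z v
      = (fderiv ℝ (fderiv ℝ ψ) z v 1 + I * fderiv ℝ (fderiv ℝ ψ) z v I) / 2 := by
  have h1 := hψ.differentiableAt_fderiv_apply 1
  have hI := hψ.differentiableAt_fderiv_apply I
  unfold wdb pdx pdy
  simp only [div_eq_inv_mul]
  rw [fderiv_const_mul (h1.fun_add (hI.const_mul I)), fderiv_fun_add h1 (hI.const_mul I),
    fderiv_const_mul hI]
  simp only [FunLike.coe_add, Pi.add_apply, FunLike.coe_smul, Pi.smul_apply, smul_eq_mul,
    hψ.fderiv_apply_fderiv_apply]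

lemma ContDiffAt.wd_wdb (hψ : ContDiffAt ℝ 2 ψ z) :
    wd (wdb ψ) z = (fderiv ℝ (fderiv ℝ ψ) z 1 1 + fderiv ℝ (fderiv ℝ ψ) z I I) / 4 := by
  have hsymm := hψ.isSymmSndFDerivAt (by simp) 1 I
  simp only [wd, pdx, pdy, hψ.fderiv_apply_wdb, hsymm]
  linear_combination (-(fderiv ℝ (fderiv ℝ ψ) z I I) / 4) * I_sq

lemma ContDiffAt.fderiv_apply_fderiv_apply_sub_I_mul {u : ℂ → ℝ} (hψ : ContDiffAt ℝ 2 ψ z)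
    (hu : DifferentiableAt ℝ u z) (v : ℂ) :
    fderiv ℝ (fun w => fderiv ℝ ψ w v - I * u w * ψ w) z v
      = fderiv ℝ (fderiv ℝ ψ) z v v - I * (fderiv ℝ u z v * ψ z + u z * fderiv ℝ ψ z v) := by
  have hψ' : DifferentiableAt ℝ ψ z := hψ.differentiableAt two_ne_zero
  rw [fderiv_fun_sub (hψ.differentiableAt_fderiv_apply v) (by fun_prop), FunLike.coe_sub,
    Pi.sub_apply, hψ.fderiv_apply_fderiv_apply, fderiv_apply_fun_mul (by fun_prop) hψ',
    fderiv_const_mul (by fun_prop)]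
  simp only [FunLike.coe_smul, Pi.smul_apply, smul_eq_mul, fderiv_apply_ofReal hu]
  ring

end SecondOrder

def wirtingerOp (c₂ c₁ c₁' c₀ : ℂ) (ψ : ℂ → ℂ) (z : ℂ) : ℂ :=
  c₂ * wd (wdb ψ) z + c₁ * wd ψ z + c₁' * wdb ψ z + c₀ * ψ z

section WirtingerOp

variable {c₂ c₁ c₁' c₀ : ℂ} (z : ℂ)

lemma wirtingerOp_const_one : wirtingerOp c₂ c₁ c₁' c₀ (fun _ => 1) z = c₀ := by
  simp [wirtingerOp, wd_const, wdb_const]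

lemma wirtingerOp_id_sub : wirtingerOp c₂ c₁ c₁' c₀ (fun w => w - z) z = c₁ := by
  simp [wirtingerOp, wd_id_sub_const, wdb_id_sub_const, wd_const]

lemma wirtingerOp_conj_sub : wirtingerOp c₂ c₁ c₁' c₀ (fun w => conj w - conj z) z = c₁' := by
  simp [wirtingerOp, wd_conj_sub_const, wdb_conj_sub_const, wd_const]

lemma wirtingerOp_id_sub_mul_conj_sub :
    wirtingerOp c₂ c₁ c₁' c₀ (fun w => (w - z) * (conj w - conj z)) z = c₂ := by
  have hwdb : wdb (fun w => (w - z) * (conj w - conj z)) = fun w => w - z := by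
    ext w
    rw [wdb_fun_mul (by fun_prop) (by fun_prop), wdb_id_sub_const, wdb_conj_sub_const]
    ring
  have hwd : wd (fun w => (w - z) * (conj w - conj z)) z = 0 := by
    rw [wd_fun_mul (by fun_prop) (by fun_prop), wd_id_sub_const, wd_conj_sub_const]
    ring
  simp [wirtingerOp, hwdb, hwd, wd_id_sub_const]

theorem wirtingerOp_coeffs_eq {n : WithTop ℕ∞} {d₂ d₁ d₁' d₀ : ℂ}
    (h : ∀ ψ : ℂ → ℂ, ContDiff ℝ n ψ →
      wirtingerOp c₂ c₁ c₁' c₀ ψ z = wirtingerOp d₂ d₁ d₁' d₀ ψ z) :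
    c₂ = d₂ ∧ c₁ = d₁ ∧ c₁' = d₁' ∧ c₀ = d₀ := by
  refine ⟨?_, ?_, ?_, ?_⟩
  · simpa only [wirtingerOp_id_sub_mul_conj_sub] using
      h (fun w => (w - z) * (conj w - conj z)) (by fun_prop)
  · simpa only [wirtingerOp_id_sub] using h (fun w => w - z) (by fun_prop)
  · simpa only [wirtingerOp_conj_sub] using h (fun w => conj w - conj z) (by fun_prop)
  · simpa only [wirtingerOp_const_one] using h (fun _ => 1) contDiff_const

end WirtingerOp

theorem LSch_eq_wirtingerOp {a b h U : ℂ → ℝ} {ψ : ℂ → ℂ} {z : ℂ}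
    (ha : DifferentiableAt ℝ a z) (hb : DifferentiableAt ℝ b z) (hψ : ContDiffAt ℝ 2 ψ z) :
    LSch a b h U ψ z
      = wirtingerOp (-4 * h z ^ 2) (2 * I * h z ^ 2 * (a z + I * b z))
          (2 * I * h z ^ 2 * (a z - I * b z))
          (h z ^ 2 * (I * (pdxR a z + pdyR b z) + a z ^ 2 + b z ^ 2) + U z) ψ z := by
  have hx : pdx (cdx a ψ) z = _ := hψ.fderiv_apply_fderiv_apply_sub_I_mul ha 1
  have hy : pdy (cdy b ψ) z = _ := hψ.fderiv_apply_fderiv_apply_sub_I_mul hb I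
  rw [LSch, cdx, hx, cdy, hy, wirtingerOp, hψ.wd_wdb]
  simp only [cdx, cdy, wd, wdb, pdx, pdy, pdxR, pdyR]
  linear_combination
    (h z : ℂ) ^ 2 * (2 * I * b z * fderiv ℝ ψ z I - (a z ^ 2 + b z ^ 2) * ψ z) * I_sq

theorem factorisation_eq_wirtingerOp {α₁ α₀ α₁s α₀s ψ : ℂ → ℂ} {z : ℂ}
    (hα₁s : DifferentiableAt ℝ α₁s z) (hα₀s : DifferentiableAt ℝ α₀s z)
    (hψ : ContDiffAt ℝ 2 ψ z) :
    α₁ z * wd (fun w => α₁s w * wdb ψ w + α₀s w * ψ w) z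
        + α₀ z * (α₁s z * wdb ψ z + α₀s z * ψ z)
      = wirtingerOp (α₁ z * α₁s z) (α₁ z * α₀s z) (α₁ z * wd α₁s z + α₀ z * α₁s z)
          (α₁ z * wd α₀s z + α₀ z * α₀s z) ψ z := by
  have hψ' := hψ.differentiableAt two_ne_zero
  rw [wd_fun_add (hα₁s.fun_mul hψ.differentiableAt_wdb) (hα₀s.fun_mul hψ'),
    wd_fun_mul hα₁s hψ.differentiableAt_wdb, wd_fun_mul hα₀s hψ', wirtingerOp]
  ring

section Coefficients

variable {a b h U : ℂ → ℝ} {α₁ α₀ α₁s α₀s : ℂ → ℂ} {z : ℂ}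

lemma α₀s_eq_of_coeff_eqs (hz : h z ≠ 0) (h₂ : -4 * h z ^ 2 = α₁ z * α₁s z)
    (h₁ : 2 * I * h z ^ 2 * (a z + I * b z) = α₁ z * α₀s z) :
    α₀s z = -(I / 2) * (a z + I * b z) * α₁s z := by
  have hα₁ : α₁ z ≠ 0 := by
    rintro hα₁
    have hsq : (h z : ℂ) ^ 2 = 0 := by linear_combination -h₂ / 4 - α₁s z * hα₁ / 4
    exact hz (by exact_mod_cast pow_eq_zero_iff two_ne_zero |>.mp hsq)
  apply mul_left_cancel₀ hα₁
  linear_combination -h₁ - (I / 2) * (a z + I * b z) * h₂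

lemma U_eq_neg_Bf_of_coeff_eqs (ha : DifferentiableAt ℝ a z) (hb : DifferentiableAt ℝ b z)
    (hα₁s : DifferentiableAt ℝ α₁s z)
    (hα₀s : α₀s =ᶠ[nhds z] fun w => -(I / 2) * (a w + I * b w) * α₁s w)
    (h₂ : -4 * h z ^ 2 = α₁ z * α₁s z)
    (h₁' : 2 * I * h z ^ 2 * (a z - I * b z) = α₁ z * wd α₁s z + α₀ z * α₁s z)
    (h₀ : h z ^ 2 * (I * (pdxR a z + pdyR b z) + a z ^ 2 + b z ^ 2) + U z
      = α₁ z * wd α₀s z + α₀ z * α₀s z) :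
    U z = -Bf a b h z := by
  have hwd : wd α₀s z = -(I / 2) * ((pdxR a z + pdyR b z + I * (pdxR b z - pdyR a z)) / 2
      * α₁s z + (a z + I * b z) * wd α₁s z) := by
    rw [hα₀s.wd_eq, wd_fun_mul (by fun_prop) hα₁s, wd_const_mul _ (by fun_prop),
      wd_ofReal_add_I_mul_ofReal ha hb]
    ring
  suffices (U z : ℂ) = -(h z ^ 2 * (pdxR b z - pdyR a z)) by simp only [Bf]; exact_mod_cast this
  linear_combination h₀ + α₁ z * hwd + α₀ z * hα₀s.self_of_nhds
    + (I / 2) * ((pdxR a z + pdyR b z + I * (pdxR b z - pdyR a z)) / 2) * h₂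
    + (I / 2) * (a z + I * b z) * h₁'
    + h z ^ 2 * (pdxR b z - pdyR a z - a z ^ 2 + (I ^ 2 - 1) * b z ^ 2) * I_sq

end Coefficients

def IsFactorisation (Ω : Set ℂ) (L : (ℂ → ℂ) → ℂ → ℂ) (α₁ α₀ α₁s α₀s : ℂ → ℂ) : Prop :=
  ∀ ψ : ℂ → ℂ, ContDiffOn ℝ (⊤ : ℕ∞) ψ Ω → ∀ z ∈ Ω,
    L ψ z = α₁ z * wd (fun w => α₁s w * wdb ψ w + α₀s w * ψ w) z +
      α₀ z * (α₁s z * wdb ψ z + α₀s z * ψ z)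

section Factorisation

variable {Ω : Set ℂ} {a b h U : ℂ → ℝ}

lemma ContDiffOn.contDiffAt_two {F : Type*} [NormedAddCommGroup F] [NormedSpace ℝ F]
    {f : ℂ → F} (hΩ : IsOpen Ω) (hf : ContDiffOn ℝ (⊤ : ℕ∞) f Ω) {z : ℂ} (hz : z ∈ Ω) :
    ContDiffAt ℝ 2 f z :=
  (hf.contDiffAt (hΩ.mem_nhds hz)).of_le (WithTop.coe_le_coe.mpr le_top)

theorem IsFactorisation.U_eq_neg_Bf {α₁ α₀ α₁s α₀s : ℂ → ℂ} (hΩ : IsOpen Ω)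
    (ha : DifferentiableOn ℝ a Ω) (hb : DifferentiableOn ℝ b Ω) (hh : ∀ z ∈ Ω, h z ≠ 0)
    (hα₁s : DifferentiableOn ℝ α₁s Ω) (hα₀s : DifferentiableOn ℝ α₀s Ω)
    (hfact : IsFactorisation Ω (LSch a b h U) α₁ α₀ α₁s α₀s) :
    ∀ z ∈ Ω, U z = -Bf a b h z := by
  have hd {F : Type} [NormedAddCommGroup F] [NormedSpace ℝ F] {f : ℂ → F}
      (hf : DifferentiableOn ℝ f Ω) {z} (hz : z ∈ Ω) := hf.differentiableAt (hΩ.mem_nhds hz)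
  have hcoeff {z} (hz : z ∈ Ω) := wirtingerOp_coeffs_eq z (n := (⊤ : ℕ∞)) fun ψ hψ =>
    (LSch_eq_wirtingerOp (hd ha hz) (hd hb hz) (hψ.contDiffOn.contDiffAt_two hΩ hz)).symm.trans <|
      (hfact ψ hψ.contDiffOn z hz).trans <|
        factorisation_eq_wirtingerOp (hd hα₁s hz) (hd hα₀s hz) (hψ.contDiffOn.contDiffAt_two hΩ hz)
  intro z hz
  obtain ⟨h₂, -, h₁', h₀⟩ := hcoeff hz
  refine U_eq_neg_Bf_of_coeff_eqs (hd ha hz) (hd hb hz) (hd hα₁s hz)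
    (Filter.eventually_of_mem (hΩ.mem_nhds hz) fun w hw => ?_) h₂ h₁' h₀
  obtain ⟨h₂, h₁, -, -⟩ := hcoeff hw
  exact α₀s_eq_of_coeff_eqs (hh w hw) h₂ h₁

theorem isFactorisation_of_U_eq_neg_Bf (hΩ : IsOpen Ω) (ha : DifferentiableOn ℝ a Ω)
    (hb : DifferentiableOn ℝ b Ω) (hUB : ∀ z ∈ Ω, U z = -Bf a b h z) :
    IsFactorisation Ω (LSch a b h U) (fun w => -4 * (h w : ℂ) ^ 2)
      (fun w => 2 * I * h w ^ 2 * (a w - I * b w)) (fun _ => 1)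
      (fun w => -(I / 2) * (a w + I * b w)) := by
  intro ψ hψ z hz
  have ha' := ha.differentiableAt (hΩ.mem_nhds hz)
  have hb' := hb.differentiableAt (hΩ.mem_nhds hz)
  have hab : DifferentiableAt ℝ (fun w => (a w : ℂ) + I * b w) z := by fun_prop
  beta_reduce
  rw [LSch_eq_wirtingerOp ha' hb' (hψ.contDiffAt_two hΩ hz),
    factorisation_eq_wirtingerOp (α₁ := fun w => -4 * (h w : ℂ) ^ 2)
      (α₀ := fun w => 2 * I * h w ^ 2 * (a w - I * b w)) (α₁s := fun _ => 1)
      (differentiableAt_const _) (hab.const_mul _) (hψ.contDiffAt_two hΩ hz)]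
  congr 1
  · ring
  · ring
  · rw [wd_const]; ring
  · rw [wd_const_mul _ hab, wd_ofReal_add_I_mul_ofReal ha' hb', hUB z hz, Bf]
    push_cast
    linear_combination
      h z ^ 2 * (a z ^ 2 + (1 - I ^ 2) * b z ^ 2 - (pdxR b z - pdyR a z)) * I_sq

end Factorisation

theorem alpha_factorisation_iff_U_eq_neg_B_general
    (Ω : Set ℂ) (hΩ : IsOpen Ω) (a b h U : ℂ → ℝ)
    (ha : ContDiffOn ℝ (⊤ : ℕ∞) a Ω) (hb : ContDiffOn ℝ (⊤ : ℕ∞) b Ω)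
    (hh : ContDiffOn ℝ (⊤ : ℕ∞) h Ω)
    (hhpos : ∀ z ∈ Ω, 0 < h z) :
    (∃ α₁ α₀ α₁s α₀s : ℂ → ℂ,
        ContDiffOn ℝ (⊤ : ℕ∞) α₁ Ω ∧ ContDiffOn ℝ (⊤ : ℕ∞) α₀ Ω ∧
        ContDiffOn ℝ (⊤ : ℕ∞) α₁s Ω ∧ ContDiffOn ℝ (⊤ : ℕ∞) α₀s Ω ∧
        ∀ ψ : ℂ → ℂ, ContDiffOn ℝ (⊤ : ℕ∞) ψ Ω → ∀ z ∈ Ω,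
          LSch a b h U ψ z =
            α₁ z * wd (fun w => α₁s w * wdb ψ w + α₀s w * ψ w) z +
            α₀ z * (α₁s z * wdb ψ z + α₀s z * ψ z)) ↔
      (∀ z ∈ Ω, U z = -Bf a b h z) := by
  have ha' := ha.differentiableOn (by simp)
  have hb' := hb.differentiableOn (by simp)
  constructor
  · rintro ⟨α₁, α₀, α₁s, α₀s, -, -, hα₁s, hα₀s, hfact⟩
    exact IsFactorisation.U_eq_neg_Bf hΩ ha' hb' (fun z hz => (hhpos z hz).ne')
      (hα₁s.differentiableOn (by simp)) (hα₀s.differentiableOn (by simp)) hfact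
  · intro hUB
    exact ⟨_, _, _, _, by fun_prop, by fun_prop, contDiffOn_const, by fun_prop,
      isFactorisation_of_U_eq_neg_Bf hΩ ha' hb' hUB⟩

/-- the α-factorisation L = (α₁∂ + α₀)(α₁*∂̄ + α₀*) exists
(with smooth coefficients) iff U = -B. -/
theorem alpha_factorisation_iff_U_eq_neg_B
    (Ω : Set ℂ) (hΩ : IsOpen Ω) (a b h U : ℂ → ℝ)
    (ha : ContDiffOn ℝ (⊤ : ℕ∞) a Ω) (hb : ContDiffOn ℝ (⊤ : ℕ∞) b Ω)
    (hh : ContDiffOn ℝ (⊤ : ℕ∞) h Ω) (hU : ContDiffOn ℝ (⊤ : ℕ∞) U Ω)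
    (hhpos : ∀ z ∈ Ω, 0 < h z) :
    (∃ α₁ α₀ α₁s α₀s : ℂ → ℂ,
        ContDiffOn ℝ (⊤ : ℕ∞) α₁ Ω ∧ ContDiffOn ℝ (⊤ : ℕ∞) α₀ Ω ∧
        ContDiffOn ℝ (⊤ : ℕ∞) α₁s Ω ∧ ContDiffOn ℝ (⊤ : ℕ∞) α₀s Ω ∧
        ∀ ψ : ℂ → ℂ, ContDiffOn ℝ (⊤ : ℕ∞) ψ Ω → ∀ z ∈ Ω,
          LSch a b h U ψ z =
            α₁ z * wd (fun w => α₁s w * wdb ψ w + α₀s w * ψ w) z +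
            α₀ z * (α₁s z * wdb ψ z + α₀s z * ψ z)) ↔
      (∀ z ∈ Ω, U z = -Bf a b h z) :=
  alpha_factorisation_iff_U_eq_neg_B_general Ω hΩ a b h U ha hb hh hhpos
end
end

section
/- Let N ≥ 0 be a real number and let ψ : ℂ → ℂ be a smooth function satisfying D_N* ψ = 0, i.e. -(1+|z|²)∂ψ + (N+1)z̄ψ = 0 on all of ℂ, and suppose ψ is normalizable for the round sphere: ∫_ℂ |ψ(z)|²(1+|z|²)^{-2} dA(z) < ∞. Then ψ ≡ 0. (Equivalently: every solution of D_N*ψ = 0 has the form ψ(z) = g(z̄)·(1+|z|²)^{N+1} with g anti-entire, and no nonzero such function is square-integrable; this is the statement dim Ker D* = 0 for positive flux on the sphere.) -/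
open Complex ComplexConjugate MeasureTheory

noncomputable section

/-- Lowering operator D_N ψ = (1+|z|²)∂̄ψ + Nzψ. -/
def DN (N : ℝ) (ψ : ℂ → ℂ) (z : ℂ) : ℂ :=
  (1 + z * conj z) * wdb ψ z + (N : ℂ) * z * ψ z

/-- Raising operator D_N* ψ = -(1+|z|²)∂ψ + (N+1)z̄ψ. -/
def DNs (N : ℝ) (ψ : ℂ → ℂ) (z : ℂ) : ℂ :=
  -(1 + z * conj z) * wd ψ z + ((N : ℂ) + 1) * conj z * ψ z

/-- Dirac monopole operator
L_N ψ = -(1+|z|²)²∂∂̄ψ - Nz(1+|z|²)∂ψ + Nz̄(1+|z|²)∂̄ψ + N²(1+|z|²)ψ. -/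
def LN (N : ℝ) (ψ : ℂ → ℂ) (z : ℂ) : ℂ :=
  -(1 + z * conj z)^2 * wd (wdb ψ) z
    - (N : ℂ) * z * (1 + z * conj z) * wd ψ z
    + (N : ℂ) * conj z * (1 + z * conj z) * wdb ψ z
    + (N : ℂ)^2 * (1 + z * conj z) * ψ z

/-!
The kernel equation says exactly that `g = conj ψ · (1 + |z|²)^(-(N+1))` satisfies `∂̄g = 0`, so
`g` is entire. Since `N ≥ 0`, `|g|² ≤ |ψ|² (1 + |z|²)⁻²` is integrable over the plane. By the mean
value property `|g(c)|²` is bounded by the average of `|g|²` on every circle around `c`, so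
integrating in polar coordinates gives `∫ |g|² ≥ 2π |g(c)|² ∫₀^∞ r dr`, forcing `g(c) = 0`.
-/

open Metric Real Set
open scoped ENNReal

theorem differentiableAt_complex_of_wdb_eq_zero {f : ℂ → ℂ} {z : ℂ}
    (hf : DifferentiableAt ℝ f z) (h : wdb f z = 0) : DifferentiableAt ℂ f z := by
  refine differentiableAt_complex_iff_differentiableAt_real.2 ⟨hf, ?_⟩
  simp only [wdb, pdx, pdy, div_eq_zero_iff, two_ne_zero, or_false] at h
  rw [smul_eq_mul]
  linear_combination -I * h + fderiv ℝ f z I * I_sq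

theorem wdb_mul {f g : ℂ → ℂ} {z : ℂ} (hf : DifferentiableAt ℝ f z)
    (hg : DifferentiableAt ℝ g z) :
    wdb (fun w ↦ f w * g w) z = wdb f z * g z + f z * wdb g z := by
  simp only [wdb, pdx, pdy, fderiv_fun_mul hf hg, add_apply, smul_apply, smul_eq_mul]
  ring

theorem wdb_conj (f : ℂ → ℂ) (z : ℂ) : wdb (fun w ↦ conj (f w)) z = conj (wd f z) := by
  have : fderiv ℝ (fun w ↦ conj (f w)) z = (conjCLE : ℂ →L[ℝ] ℂ).comp (fderiv ℝ f z) :=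
    conjCLE.comp_fderiv
  simp only [wdb, wd, pdx, pdy, this]
  simp [map_ofNat]

theorem hasFDerivAt_one_add_normSq_rpow (a : ℝ) (z : ℂ) :
    HasFDerivAt (fun w : ℂ ↦ (1 + normSq w) ^ a)
      ((a * (1 + normSq z) ^ (a - 1)) • (2 • innerSL ℝ z)) z := by
  simp_rw [normSq_eq_norm_sq]
  have := ((hasFDerivAt_id z).norm_sq.const_add 1).rpow_const (p := a) (Or.inl (by positivity))
  simpa using this

theorem wdb_one_add_normSq_rpow (a : ℝ) (z : ℂ) :
    wdb (fun w : ℂ ↦ (((1 + normSq w) ^ a : ℝ) : ℂ)) z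
      = a * ((1 + normSq z) ^ (a - 1) : ℝ) * z := by
  have h : HasFDerivAt (fun w : ℂ ↦ (((1 + normSq w) ^ a : ℝ) : ℂ)) _ z :=
    ofRealCLM.hasFDerivAt.comp z (hasFDerivAt_one_add_normSq_rpow a z)
  have h1 : fderiv ℝ (fun w : ℂ ↦ (((1 + normSq w) ^ a : ℝ) : ℂ)) z 1
      = (a * (1 + normSq z) ^ (a - 1) * (2 * z.re) : ℝ) := by simp [h.fderiv]
  have hI : fderiv ℝ (fun w : ℂ ↦ (((1 + normSq w) ^ a : ℝ) : ℂ)) z I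
      = (a * (1 + normSq z) ^ (a - 1) * (2 * z.im) : ℝ) := by simp [h.fderiv]
  rw [wdb, pdx, pdy, h1, hI]
  push_cast
  linear_combination (a * ((1 + normSq z) ^ (a - 1) : ℝ) : ℂ) * re_add_im z

theorem differentiableAt_conj_mul_one_add_normSq_rpow {N : ℝ} {ψ : ℂ → ℂ} {z : ℂ}
    (hψ : DifferentiableAt ℝ ψ z) (hker : DNs N ψ z = 0) :
    DifferentiableAt ℂ (fun w ↦ conj (ψ w) * (((1 + normSq w) ^ (-(N + 1)) : ℝ) : ℂ)) z := by
  have hs : 0 < 1 + normSq z := add_pos_of_pos_of_nonneg one_pos (normSq_nonneg z)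
  have hweight : DifferentiableAt ℝ (fun w : ℂ ↦ (((1 + normSq w) ^ (-(N + 1)) : ℝ) : ℂ)) z :=
    (ofRealCLM.hasFDerivAt.comp z (hasFDerivAt_one_add_normSq_rpow _ z)).differentiableAt
  have hkerConj : (1 + (normSq z : ℂ)) * conj (wd ψ z) = (N + 1) * z * conj (ψ z) := by
    have := congrArg conj hker
    simp only [DNs, map_add, map_mul, map_neg, map_one, conj_conj, conj_ofReal, map_zero] at this
    rw [normSq_eq_conj_mul_self]
    linear_combination -this
  have hpow : (1 + normSq z) ^ (-(N + 1)) = (1 + normSq z) ^ (-(N + 1) - 1) * (1 + normSq z) := by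
    rw [← Real.rpow_add_one hs.ne']; ring_nf
  have hconj : DifferentiableAt ℝ (fun w ↦ conj (ψ w)) z := hψ.star
  refine differentiableAt_complex_of_wdb_eq_zero (hconj.mul hweight) ?_
  rw [wdb_mul hconj hweight, wdb_conj, wdb_one_add_normSq_rpow, hpow]
  push_cast
  linear_combination ((1 + normSq z) ^ (-(N + 1) - 1) : ℝ) * hkerConj

theorem sq_norm_conj_mul_one_add_normSq_rpow_le {N : ℝ} (hN : 0 ≤ N) (v z : ℂ) :
    ‖conj v * (((1 + normSq z) ^ (-(N + 1)) : ℝ) : ℂ)‖ ^ 2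
      ≤ ‖v‖ ^ 2 * (1 + normSq z) ^ (-2 : ℝ) := by
  have hs : 1 ≤ 1 + normSq z := le_add_of_nonneg_right (normSq_nonneg z)
  rw [norm_mul, norm_conj, norm_real, Real.norm_of_nonneg (by positivity), mul_pow,
    ← Real.rpow_mul_natCast (by positivity)]
  gcongr
  push_cast
  linarith

theorem norm_circleAverage_le {E : Type*} [NormedAddCommGroup E] [NormedSpace ℝ E]
    (f : ℂ → E) (c : ℂ) (R : ℝ) :
    ‖circleAverage f c R‖ ≤ circleAverage (fun z ↦ ‖f z‖) c R := by
  rw [circleAverage_def, circleAverage_def, norm_smul, Real.norm_of_nonneg (by positivity),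
    smul_eq_mul]
  gcongr
  exact intervalIntegral.norm_integral_le_integral_norm (by positivity)

theorem DiffContOnCl.sq_norm_le_circleAverage {f : ℂ → ℂ} {c : ℂ} {R : ℝ}
    (hf : DiffContOnCl ℂ f (ball c |R|)) :
    ‖f c‖ ^ 2 ≤ Real.circleAverage (fun z ↦ ‖f z‖ ^ 2) c R := by
  have hmean : Real.circleAverage (fun z ↦ f z * f z) c R = f c * f c :=
    DiffContOnCl.circleAverage ⟨hf.1.mul hf.1, hf.2.mul hf.2⟩
  calc ‖f c‖ ^ 2 = ‖Real.circleAverage (fun z ↦ f z * f z) c R‖ := by rw [hmean, norm_mul, sq]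
    _ ≤ Real.circleAverage (fun z ↦ ‖f z * f z‖) c R := norm_circleAverage_le _ c R
    _ = Real.circleAverage (fun z ↦ ‖f z‖ ^ 2) c R := by simp_rw [norm_mul, sq]

theorem setIntegral_Ioo_circleMap {E : Type*} [NormedAddCommGroup E] [NormedSpace ℝ E]
    (f : ℂ → E) (c : ℂ) (R : ℝ) :
    ∫ θ in Ioo (-π) π, f (circleMap c R θ) = (2 * π) • circleAverage f c R := by
  rw [circleAverage_eq_integral_add (-π), smul_smul, mul_inv_cancel₀ (by positivity), one_smul,
    intervalIntegral.integral_comp_add_right (fun θ ↦ f (circleMap c R θ)),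
    intervalIntegral.integral_of_le (by linarith [pi_pos]), integral_Ioc_eq_integral_Ioo,
    zero_add, show 2 * π + -π = π by ring]

theorem lintegral_eq_lintegral_Ioi_mul_lintegral_circleMap {f : ℂ → ℝ≥0∞} (hf : Measurable f)
    (c : ℂ) :
    ∫⁻ z, f z = ∫⁻ r in Ioi 0, ENNReal.ofReal r * ∫⁻ θ in Ioo (-π) π, f (circleMap c r θ) := by
  have hsymm : Continuous Complex.polarCoord.symm := by
    simp_rw [funext Complex.polarCoord_symm_apply]; fun_prop
  have hmeas : Measurable fun p : ℝ × ℝ ↦ ENNReal.ofReal p.1 • f (c + Complex.polarCoord.symm p) :=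
    measurable_fst.ennreal_ofReal.smul (hf.comp (hsymm.const_add c).measurable)
  rw [← lintegral_add_left_eq_self f c, ← Complex.lintegral_comp_polarCoord_symm,
    polarCoord_target, Measure.volume_eq_prod, ← Measure.prod_restrict,
    lintegral_prod _ hmeas.aemeasurable]
  refine lintegral_congr fun r ↦ ?_
  rw [← lintegral_const_mul' _ _ ENNReal.ofReal_ne_top]
  refine lintegral_congr fun θ ↦ ?_
  rw [smul_eq_mul, Complex.polarCoord_symm_apply, circleMap, exp_mul_I]
  push_cast
  ring_nf

theorem Differentiable.ofReal_two_pi_mul_sq_norm_le_lintegral_circleMap {f : ℂ → ℂ}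
    (hf : Differentiable ℂ f) (c : ℂ) (R : ℝ) :
    ENNReal.ofReal (2 * π * ‖f c‖ ^ 2)
      ≤ ∫⁻ θ in Ioo (-π) π, ENNReal.ofReal (‖f (circleMap c R θ)‖ ^ 2) := by
  have hcont : Continuous fun θ ↦ ‖f (circleMap c R θ)‖ ^ 2 := by
    have := hf.continuous; fun_prop
  rw [← ofReal_integral_eq_lintegral_ofReal
      ((hcont.integrableOn_Icc).mono_set Ioo_subset_Icc_self) (ae_of_all _ fun θ ↦ by positivity),
    setIntegral_Ioo_circleMap (fun z ↦ ‖f z‖ ^ 2), smul_eq_mul]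
  gcongr
  exact hf.diffContOnCl.sq_norm_le_circleAverage

theorem Differentiable.eq_zero_of_integrable_sq_norm {f : ℂ → ℂ} (hf : Differentiable ℂ f)
    (hint : Integrable fun z ↦ ‖f z‖ ^ 2) : f = 0 := by
  funext c
  by_contra hc
  set a := ENNReal.ofReal (2 * π * ‖f c‖ ^ 2)
  have ha : a ≠ 0 := by
    have : 0 < ‖f c‖ := norm_pos_iff.2 hc
    simp only [a, ne_eq, ENNReal.ofReal_eq_zero, not_le]
    positivity
  have hinfinite : ∫⁻ z, ENNReal.ofReal (‖f z‖ ^ 2) = ∞ := by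
    have hmeas : Measurable fun z ↦ ENNReal.ofReal (‖f z‖ ^ 2) := by
      have := hf.continuous; fun_prop
    rw [lintegral_eq_lintegral_Ioi_mul_lintegral_circleMap hmeas c, eq_top_iff]
    calc ∞ = ∫⁻ _ in Ioi (1 : ℝ), a := by simp [ha]
      _ ≤ ∫⁻ r in Ioi (1 : ℝ), ENNReal.ofReal r * a := by
        refine setLIntegral_mono' measurableSet_Ioi fun r hr ↦ ?_
        exact le_mul_of_one_le_left' (ENNReal.one_le_ofReal.2 (le_of_lt hr))
      _ ≤ ∫⁻ r in Ioi (0 : ℝ), ENNReal.ofReal r * a :=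
        lintegral_mono_set (Ioi_subset_Ioi zero_le_one)
      _ ≤ _ := lintegral_mono fun r ↦ by
        gcongr; exact hf.ofReal_two_pi_mul_sq_norm_le_lintegral_circleMap c r
  exact hint.lintegral_lt_top.ne hinfinite

/-- for N ≥ 0, every smooth solution of D_N*ψ = 0 on ℂ which is
normalizable for the round-sphere norm ∫|ψ|²(1+|z|²)^{-2}dA < ∞ vanishes
identically (dim Ker D* = 0 for positive flux on the sphere). -/
theorem no_normalizable_antiground_states
    (N : ℝ) (hN : 0 ≤ N) (ψ : ℂ → ℂ) (hψ : ContDiff ℝ (⊤ : ℕ∞) ψ)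
    (hker : ∀ z : ℂ, DNs N ψ z = 0)
    (hnorm : Integrable (fun z : ℂ =>
      ‖ψ z‖^2 * (1 + Complex.normSq z) ^ (-2 : ℝ))) :
    ∀ z : ℂ, ψ z = 0 := by
  set g : ℂ → ℂ := fun w ↦ conj (ψ w) * (((1 + normSq w) ^ (-(N + 1)) : ℝ) : ℂ)
  have hg : Differentiable ℂ g := fun z ↦
    differentiableAt_conj_mul_one_add_normSq_rpow (hψ.differentiable (by simp) z) (hker z)
  have hgL2 : Integrable fun z ↦ ‖g z‖ ^ 2 :=
    hnorm.mono' (hg.continuous.norm.pow 2).aestronglyMeasurable <| ae_of_all _ fun z ↦ by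
      rw [Real.norm_of_nonneg (by positivity)]
      exact sq_norm_conj_mul_one_add_normSq_rpow_le hN (ψ z) z
  intro z
  have hz : g z = 0 := congrFun (hg.eq_zero_of_integrable_sq_norm hgL2) z
  have hs : 0 < 1 + normSq z := add_pos_of_pos_of_nonneg one_pos (normSq_nonneg z)
  simpa [g, (Real.rpow_pos_of_pos hs _).ne'] using hz
end
end
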